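/- The group ⟨a, b, x | x = a²b², bxⁿ = xⁿa, ax^{n+1} = x^{n+1}b, x^{2n+1} = 1⟩ is isomorphic to ⟨a, x | x^{2n+1} = 1, (a²xⁿ)² = 1⟩. -/

import Mathlib

open FreeGroup

/-- Generators for the three-generator presentation: `a`, `b`, `x`. -/
def a3 : FreeGroup (Fin 3) := FreeGroup.of 0
def b3 : FreeGroup (Fin 3) := FreeGroup.of 1
def x3 : FreeGroup (Fin 3) := FreeGroup.of 2

/-- The relations of `⟨a, b, x | x = a²b², bxⁿ = xⁿa, ax^{n+1} = x^{n+1}b, x^{2n+1} = 1⟩`. -/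
def rels3 (n : ℕ) : Set (FreeGroup (Fin 3)) :=
  {x3 * (a3 ^ 2 * b3 ^ 2)⁻¹,
   b3 * x3 ^ n * (x3 ^ n * a3)⁻¹,
   a3 * x3 ^ (n + 1) * (x3 ^ (n + 1) * b3)⁻¹,
   x3 ^ (2 * n + 1)}

/-- Generators for the two-generator presentation: `a`, `x`. -/
def a2 : FreeGroup (Fin 2) := FreeGroup.of 0
def x2 : FreeGroup (Fin 2) := FreeGroup.of 1

/-- The relations of `⟨a, x | x^{2n+1} = 1, (a²xⁿ)² = 1⟩`. -/
def rels2 (n : ℕ) : Set (FreeGroup (Fin 2)) :=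
  {x2 ^ (2 * n + 1), (a2 ^ 2 * x2 ^ n) ^ 2}

/-!
The relation `bxⁿ = xⁿa` says `b = xⁿax⁻ⁿ`, so `b` can be eliminated. After the substitution
`x = a²b²` reads `x·xⁿ = a²xⁿa²`, i.e. `(a²xⁿ)² = x^{2n+1} = 1`, while `ax^{n+1} = x^{n+1}b` follows
from `x^{2n+1} = 1` alone, because then `x^{n+1} = x⁻ⁿ`.
-/

theorem PresentedGroup.lift_of_eq_one {α : Type*} {rels : Set (FreeGroup α)} {r : FreeGroup α}
    (hr : r ∈ rels) : FreeGroup.lift (PresentedGroup.of (rels := rels)) r = 1 := by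
  rw [show FreeGroup.lift PresentedGroup.of = PresentedGroup.mk rels from
    FreeGroup.ext_hom _ _ fun _ ↦ FreeGroup.lift_apply_of]
  exact PresentedGroup.one_of_mem hr

section Relations
variable {G : Type*} [Group G] (n : ℕ)

def ThreeGenRels (a b x : G) : Prop :=
  x = a ^ 2 * b ^ 2 ∧ b * x ^ n = x ^ n * a ∧ a * x ^ (n + 1) = x ^ (n + 1) * b ∧
    x ^ (2 * n + 1) = 1

def TwoGenRels (a x : G) : Prop :=
  x ^ (2 * n + 1) = 1 ∧ (a ^ 2 * x ^ n) ^ 2 = 1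

theorem lift_rels3_eq_one_iff (a b x : G) :
    (∀ r ∈ rels3 n, FreeGroup.lift ![a, b, x] r = 1) ↔ ThreeGenRels n a b x := by
  simp only [rels3, a3, b3, x3, Set.mem_insert_iff, Set.mem_singleton_iff, forall_eq_or_imp,
    forall_eq, _root_.map_mul, _root_.map_inv, _root_.map_pow, FreeGroup.lift_apply_of,
    mul_inv_eq_one]
  rfl

theorem lift_rels2_eq_one_iff (a x : G) :
    (∀ r ∈ rels2 n, FreeGroup.lift ![a, x] r = 1) ↔ TwoGenRels n a x := by
  simp only [rels2, a2, x2, Set.mem_insert_iff, Set.mem_singleton_iff, forall_eq_or_imp,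
    forall_eq, _root_.map_mul, _root_.map_pow, FreeGroup.lift_apply_of]
  rfl

variable {n}

theorem eq_sq_mul_conj_sq_iff {a x : G} :
    x = a ^ 2 * (x ^ n * a * (x ^ n)⁻¹) ^ 2 ↔ (a ^ 2 * x ^ n) ^ 2 = x ^ (2 * n + 1) := by
  rw [conj_pow, ← mul_assoc, ← mul_assoc, eq_mul_inv_iff_mul_eq, ← mul_left_inj (x ^ n), eq_comm,
    sq (a ^ 2 * x ^ n), show x ^ (2 * n + 1) = x * x ^ n * x ^ n by
      rw [two_mul, pow_succ', pow_add, mul_assoc]]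
  simp only [mul_assoc]

theorem threeGenRels_iff {a b x : G} :
    ThreeGenRels n a b x ↔ b = x ^ n * a * (x ^ n)⁻¹ ∧ TwoGenRels n a x := by
  constructor
  · rintro ⟨hx, hb, -, hord⟩
    obtain rfl : b = x ^ n * a * (x ^ n)⁻¹ := eq_mul_inv_of_mul_eq hb
    exact ⟨rfl, hord, hord ▸ eq_sq_mul_conj_sq_iff.1 hx⟩
  · rintro ⟨rfl, hord, hax⟩
    have hinv : x ^ (n + 1) = (x ^ n)⁻¹ :=
      eq_inv_of_mul_eq_one_left (by rw [← pow_add, ← hord]; ring_nf)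
    refine ⟨eq_sq_mul_conj_sq_iff.2 (hax.trans hord.symm), by group, ?_, hord⟩
    rw [hinv]; group

end Relations

section Isomorphism
variable (n : ℕ)

theorem threeGenRels_of :
    ThreeGenRels n (PresentedGroup.of 0 : PresentedGroup (rels3 n)) (.of 1) (.of 2) :=
  (lift_rels3_eq_one_iff n _ _ _).1 fun _ hr ↦ by
    convert PresentedGroup.lift_of_eq_one hr; ext i; fin_cases i <;> rfl

theorem twoGenRels_of : TwoGenRels n (PresentedGroup.of 0 : PresentedGroup (rels2 n)) (.of 1) :=
  (lift_rels2_eq_one_iff n _ _).1 fun _ hr ↦ by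
    convert PresentedGroup.lift_of_eq_one hr; ext i; fin_cases i <;> rfl

noncomputable def threeGenToTwoGen : PresentedGroup (rels3 n) →* PresentedGroup (rels2 n) :=
  let a := PresentedGroup.of 0; let x := PresentedGroup.of 1
  PresentedGroup.toGroup
    ((lift_rels3_eq_one_iff n a (x ^ n * a * (x ^ n)⁻¹) x).2
      (threeGenRels_iff.2 ⟨rfl, twoGenRels_of n⟩))

noncomputable def twoGenToThreeGen : PresentedGroup (rels2 n) →* PresentedGroup (rels3 n) :=
  PresentedGroup.toGroup
    ((lift_rels2_eq_one_iff n (.of 0) (.of 2)).2 (threeGenRels_iff.1 (threeGenRels_of n)).2)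

end Isomorphism

theorem three_gen_iso_two_gen_general (n : ℕ) :
    Nonempty (PresentedGroup (rels3 n) ≃* PresentedGroup (rels2 n)) := by
  have hb := (threeGenRels_iff.1 (threeGenRels_of n)).1
  refine ⟨MonoidHom.toMulEquiv (threeGenToTwoGen n) (twoGenToThreeGen n) ?_ ?_⟩
  · ext i; fin_cases i <;> simp [threeGenToTwoGen, twoGenToThreeGen, PresentedGroup.toGroup.of, hb]
  · ext i; fin_cases i <;> rfl

/-- `⟨a, b, x | x = a²b², bxⁿ = xⁿa, ax^{n+1} = x^{n+1}b, x^{2n+1} = 1⟩` is isomorphic to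
`⟨a, x | x^{2n+1} = 1, (a²xⁿ)² = 1⟩`. -/
theorem three_gen_iso_two_gen (n : ℕ) (hn : 0 < n) :
    Nonempty (PresentedGroup (rels3 n) ≃* PresentedGroup (rels2 n)) :=
  three_gen_iso_two_gen_general n
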